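/- Let u, v, ũ, ṽ be complex numbers of absolute value 1. Then Φ_{B₂}(u,v) = Φ_{B₂}(ũ,ṽ) if and only if the pair (ũ,ṽ) is one of the eight pairs (u,v), (u,v⁻¹), (u⁻¹,v), (u⁻¹,v⁻¹), (v,u), (v⁻¹,u), (v,u⁻¹), (v⁻¹,u⁻¹). -/

import Mathlib

/-- `Φ_{B₂}(u,v) = (u + u⁻¹ + v + v⁻¹, uv + (uv)⁻¹ + uv⁻¹ + u⁻¹v)`. -/
noncomputable def PhiB2 (u v : ℂ) : ℂ × ℂ :=
  (u + u⁻¹ + v + v⁻¹, u * v + (u * v)⁻¹ + u * v⁻¹ + u⁻¹ * v)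

/-!
Both coordinates of `Φ_{B₂}(u,v)` are symmetric functions of `a = u + u⁻¹` and `b = v + v⁻¹`:
they are `a + b` and `a * b`. Hence `Φ_{B₂}` determines the unordered pair `{a, b}`, and for
`x ≠ 0` the value `x + x⁻¹` determines `x` up to inversion, since
`x + x⁻¹ - (y + y⁻¹) = (x - y)(xy - 1)/(xy)`.
-/

theorem phiB2_eq_add_mul (u v : ℂ) :
    PhiB2 u v = ((u + u⁻¹) + (v + v⁻¹), (u + u⁻¹) * (v + v⁻¹)) := by
  simp only [PhiB2, mul_inv, Prod.mk.injEq]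
  constructor <;> ring

theorem add_eq_add_and_mul_eq_mul_iff {R : Type*} [CommRing R] [NoZeroDivisors R]
    {a b c d : R} : a + b = c + d ∧ a * b = c * d ↔ (c = a ∧ d = b) ∨ (c = b ∧ d = a) := by
  constructor
  · rintro ⟨hsum, hprod⟩
    have hroots : (c - a) * (c - b) = 0 := by
      linear_combination (-c) * hsum + hprod
    rcases mul_eq_zero.mp hroots with hca | hcb
    · exact Or.inl ⟨sub_eq_zero.mp hca, by linear_combination -hsum - hca⟩
    · exact Or.inr ⟨sub_eq_zero.mp hcb, by linear_combination -hsum - hcb⟩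
  · rintro (⟨rfl, rfl⟩ | ⟨rfl, rfl⟩)
    · exact ⟨rfl, rfl⟩
    · exact ⟨add_comm _ _, mul_comm _ _⟩

theorem add_inv_eq_add_inv_iff {K : Type*} [Field K] {x y : K} (hx : x ≠ 0) (hy : y ≠ 0) :
    x + x⁻¹ = y + y⁻¹ ↔ x = y ∨ x = y⁻¹ := by
  constructor
  · intro h
    have hfactor : (x - y) * (x * y - 1) = 0 := by
      field_simp at h
      linear_combination h
    rcases mul_eq_zero.mp hfactor with hxy | hxy
    · exact Or.inl (sub_eq_zero.mp hxy)
    · exact Or.inr (eq_inv_of_mul_eq_one_left (sub_eq_zero.mp hxy))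
  · rintro (rfl | rfl)
    · rfl
    · rw [inv_inv, add_comm]

/-- for unimodular `u, v, ũ, ṽ`, `Φ_{B₂}(u,v) = Φ_{B₂}(ũ,ṽ)` iff `(ũ,ṽ)`
is one of the eight pairs
`(u,v), (u,v⁻¹), (u⁻¹,v), (u⁻¹,v⁻¹), (v,u), (v⁻¹,u), (v,u⁻¹), (v⁻¹,u⁻¹)`. -/
theorem stmt_15 (u v ut vt : ℂ) (hu : ‖u‖ = 1) (hv : ‖v‖ = 1)
    (hut : ‖ut‖ = 1) (hvt : ‖vt‖ = 1) :
    PhiB2 u v = PhiB2 ut vt ↔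
      (ut, vt) = (u, v) ∨ (ut, vt) = (u, v⁻¹) ∨ (ut, vt) = (u⁻¹, v) ∨ (ut, vt) = (u⁻¹, v⁻¹)
        ∨ (ut, vt) = (v, u) ∨ (ut, vt) = (v⁻¹, u) ∨ (ut, vt) = (v, u⁻¹)
        ∨ (ut, vt) = (v⁻¹, u⁻¹) := by
  have hu0 : u ≠ 0 := norm_ne_zero_iff.mp (by simp [hu])
  have hv0 : v ≠ 0 := norm_ne_zero_iff.mp (by simp [hv])
  have hut0 : ut ≠ 0 := norm_ne_zero_iff.mp (by simp [hut])
  have hvt0 : vt ≠ 0 := norm_ne_zero_iff.mp (by simp [hvt])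
  rw [phiB2_eq_add_mul, phiB2_eq_add_mul, Prod.mk.injEq, add_eq_add_and_mul_eq_mul_iff,
    add_inv_eq_add_inv_iff hut0 hu0, add_inv_eq_add_inv_iff hvt0 hv0,
    add_inv_eq_add_inv_iff hut0 hv0, add_inv_eq_add_inv_iff hvt0 hu0]
  simp only [Prod.mk.injEq]
  tauto
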